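/- arXiv:2402.14633 — 3 statements merged into one kernel-verified Lean document; each statement's English description precedes it below -/
import Mathlib

section
/- Let T be a rooted tree, let S be a finite set of nodes sorted in DFS entry-time order as s_1, ..., s_m, and let u = s_a and v = s_b with a < b. Then there exists an index j with a ≤ j < b such that LCA(s_j, s_{j+1}) = LCA(u, v). -/
/-!
The ancestors of a node in a tree form a chain, so for three nodes `u, x, v` whose common
ancestor `w = LCA(u, v)` is an ancestor of `x`, the two candidates `LCA(u, x)` and `LCA(x, v)`
are comparable; the higher one is an ancestor of both `u` and `v`, hence equals `w`. In DFS order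
every node `x` entered between `u` and `v` lies in the subtree of `w`, so taking `x` to be the
successor of `u` and inducting on the distance between `u` and `v` yields a consecutive pair.
-/

variable {V : Type} [Fintype V] [DecidableEq V]

/-- `u` is an ancestor of `v` in the tree `G` rooted at `root`:
`u` lies on the unique path from `root` to `v`. -/
def isAncestor (G : SimpleGraph V) (root u v : V) : Prop :=
  G.dist root u + G.dist u v = G.dist root v

/-- `w` is the lowest common ancestor of `u` and `v`: a common ancestor such that
every common ancestor of `u` and `v` is an ancestor of `w`. -/
def isLCA (G : SimpleGraph V) (root u v w : V) : Prop :=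
  isAncestor G root w u ∧ isAncestor G root w v ∧
    ∀ x, isAncestor G root x u → isAncestor G root x v → isAncestor G root x w

/-- `tin` is a DFS entry-time ordering of the tree `G` rooted at `root`:
distinct nodes get distinct times, ancestors are entered no later than their
descendants, and each subtree occupies a contiguous interval of entry times. -/
structure IsDFSOrder (G : SimpleGraph V) (root : V) (tin : V → ℕ) : Prop where
  inj : Function.Injective tin
  anc_le : ∀ u v, isAncestor G root u v → tin u ≤ tin v
  interval : ∀ w x y z, isAncestor G root w x → isAncestor G root w z →
    tin x ≤ tin y → tin y ≤ tin z → isAncestor G root w y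

theorem Fin.exists_consecutive_eq_of_split {α : Type*} {m : ℕ} (L : Fin m → Fin m → α)
    (hsplit : ∀ a c b, a < c → c < b → L a c = L a b ∨ L c b = L a b)
    (a b : Fin m) (hab : a < b) :
    ∃ j k : Fin m, a ≤ j ∧ (k : ℕ) = (j : ℕ) + 1 ∧ k ≤ b ∧ L j k = L a b := by
  obtain ⟨d, hd⟩ := Nat.exists_eq_add_of_lt hab
  induction d generalizing a with
  | zero => exact ⟨a, b, le_rfl, hd, le_rfl, rfl⟩
  | succ d ih =>
    let c : Fin m := ⟨a + 1, by omega⟩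
    have hac : a < c := Fin.lt_def.mpr (Nat.lt_succ_self _)
    have hcb : c < b := Fin.lt_def.mpr (by simp only [c]; omega)
    rcases hsplit a c b hac hcb with hc | hc
    · exact ⟨a, c, le_rfl, rfl, hcb.le, hc⟩
    · obtain ⟨j, k, hcj, hk, hkb, hjk⟩ := ih c hcb (by simp only [c]; omega)
      exact ⟨j, k, hac.le.trans hcj, hk, hkb, hjk.trans hc⟩

theorem SimpleGraph.Walk.dist_add_dist_le_length {α : Type*} {G : SimpleGraph α} {u v x : α}
    (p : G.Walk u v) (hx : x ∈ p.support) :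
    G.dist u x + G.dist x v ≤ p.length := by
  classical
  rw [← p.take_spec hx, Walk.length_append]
  exact add_le_add (dist_le _) (dist_le _)

section Ancestor

variable {α : Type} {G : SimpleGraph α} {root : α}

theorem isAncestor_trans (hG : G.Connected) {x y z : α}
    (hxy : isAncestor G root x y) (hyz : isAncestor G root y z) :
    isAncestor G root x z := by
  unfold isAncestor at *
  have := hG.dist_triangle (u := x) (v := y) (w := z)
  have := hG.dist_triangle (u := root) (v := x) (w := z)
  omega

theorem isAncestor_antisymm (hG : G.Connected) {x y : α}
    (hxy : isAncestor G root x y) (hyx : isAncestor G root y x) : x = y := by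
  unfold isAncestor at *
  exact hG.dist_eq_zero_iff.mp (by omega)

theorem SimpleGraph.IsTree.mem_support_of_isAncestor (hG : G.IsTree) {x v : α}
    (hx : isAncestor G root x v) {p : G.Walk root v} (hp : p.IsPath) : x ∈ p.support := by
  obtain ⟨A, hA⟩ := hG.connected.exists_walk_length_eq_dist root x
  obtain ⟨B, hB⟩ := hG.connected.exists_walk_length_eq_dist x v
  have hAB : (A.append B).IsPath :=
    Walk.isPath_of_length_eq_dist _ (by rw [Walk.length_append, hA, hB]; exact hx)
  rw [(hG.existsUnique_path root v).unique hp hAB, Walk.mem_support_append_iff]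
  exact Or.inl A.end_mem_support

theorem SimpleGraph.IsTree.isAncestor_total (hG : G.IsTree) {x y v : α}
    (hx : isAncestor G root x v) (hy : isAncestor G root y v) :
    isAncestor G root x y ∨ isAncestor G root y x := by
  have hconn := hG.connected
  obtain ⟨A, hA⟩ := hconn.exists_walk_length_eq_dist root x
  obtain ⟨B, hB⟩ := hconn.exists_walk_length_eq_dist x v
  have hAB : (A.append B).IsPath :=
    Walk.isPath_of_length_eq_dist _ (by rw [Walk.length_append, hA, hB]; exact hx)
  have hyAB := hG.mem_support_of_isAncestor hy hAB
  unfold isAncestor at *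
  rcases (Walk.mem_support_append_iff _ _).mp hyAB with hyA | hyB
  · have := A.dist_add_dist_le_length hyA
    have := hconn.dist_triangle (u := root) (v := y) (w := x)
    right; omega
  · have := B.dist_add_dist_le_length hyB
    have := hconn.dist_triangle (u := x) (v := y) (w := v)
    have := hconn.dist_triangle (u := root) (v := x) (w := y)
    left; omega

theorem isLCA.eq_of_isAncestor (hG : G.Connected) {u v w z : α} (hw : isLCA G root u v w)
    (hzu : isAncestor G root z u) (hzv : isAncestor G root z v) (hwz : isAncestor G root w z) :
    z = w :=
  isAncestor_antisymm hG (hw.2.2 z hzu hzv) hwz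

theorem SimpleGraph.IsTree.isLCA_split (hG : G.IsTree) {u v w x p q : α}
    (hw : isLCA G root u v w) (hwx : isAncestor G root w x)
    (hp : isLCA G root u x p) (hq : isLCA G root x v q) :
    p = w ∨ q = w := by
  have hconn := hG.connected
  rcases hG.isAncestor_total hp.2.1 hq.1 with hpq | hqp
  · exact Or.inl <| hw.eq_of_isAncestor hconn hp.1 (isAncestor_trans hconn hpq hq.2.1)
      (hp.2.2 w hw.1 hwx)
  · exact Or.inr <| hw.eq_of_isAncestor hconn (isAncestor_trans hconn hqp hp.1) hq.2.1
      (hq.2.2 w hwx hw.2.1)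

end Ancestor

/-- the LCA of any two members of a DFS-sorted family is attained
as the LCA of some consecutive pair between them. -/
theorem stmt6 (G : SimpleGraph V) (hG : G.IsTree) (root : V) (tin : V → ℕ)
    (hdfs : IsDFSOrder G root tin)
    (lca : V → V → V) (hlca : ∀ u v, isLCA G root u v (lca u v))
    {m : ℕ} (s : Fin m → V)
    (hmono : ∀ i j : Fin m, i < j → tin (s i) < tin (s j))
    (a b : Fin m) (hab : a < b) :
    ∃ j k : Fin m, a ≤ j ∧ (k : ℕ) = (j : ℕ) + 1 ∧ k ≤ b ∧
      lca (s j) (s k) = lca (s a) (s b) := by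
  refine Fin.exists_consecutive_eq_of_split (fun i j => lca (s i) (s j)) ?_ a b hab
  intro i c k hic hck
  have hw := hlca (s i) (s k)
  have hwc : isAncestor G root (lca (s i) (s k)) (s c) :=
    hdfs.interval _ _ _ _ hw.1 hw.2.1 (hmono i c hic).le (hmono c k hck).le
  exact hG.isLCA_split hw hwc (hlca _ _) (hlca _ _)
end

section
/- Let T be a rooted tree and S a finite set of nodes closed under pairwise LCA (i.e., u, v ∈ S implies LCA(u,v) ∈ S). Define a graph G on vertex set S with an edge between u, v ∈ S iff no other node x ∈ S lies strictly on the tree path between u and v (i.e., there is no x ∈ S, x ≠ u, x ≠ v with dist(x,u) + dist(x,v) = dist(u,v)). Then G is a tree (connected and acyclic) with |S| - 1 edges. -/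
variable {V : Type} [Fintype V] [DecidableEq V]

/-- The virtual (compressed) tree of a set `S` of nodes of the tree `G`:
`u` and `v` are adjacent iff both are in `S` and no other node of `S` lies on
the tree path between them. -/
def virtGraph (G : SimpleGraph V) (S : Finset V) : SimpleGraph V :=
  SimpleGraph.fromRel fun u v =>
    u ∈ S ∧ v ∈ S ∧ ¬ ∃ x ∈ S, x ≠ u ∧ x ≠ v ∧ G.dist u x + G.dist x v = G.dist u v

/-!
Read `isAncestor G a x b` as "`x` lies on the path from `a` to `b`", for any `a`, not only the
root. The shallowest vertex `r` of `S` is an ancestor of all of `S`, because `lca r s ∈ S`.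
Since `lca u v` lies on the path from `u` to `v`, closure under LCA makes the endpoints of every
edge of the virtual tree comparable, and then the upper one is the parent of the lower one: its
deepest proper ancestor in `S`. So the edges are exactly the pairs `s(parent v, v)` with
`v ∈ S \ {r}`, which gives `|S| - 1` edges, and following parents connects every vertex to `r`.
A connected graph with one edge fewer than vertices is a tree.
-/

namespace SimpleGraph

variable {α : Type} {G : SimpleGraph α}

lemma isAncestor_refl (a x : α) : isAncestor G a x x := by
  simp [isAncestor]

lemma isAncestor_comm {a x b : α} : isAncestor G a x b ↔ isAncestor G b x a := by
  unfold isAncestor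
  rw [dist_comm (u := a) (v := x), dist_comm (u := x) (v := b), dist_comm (u := a) (v := b),
    add_comm]

lemma Connected.eq_of_isAncestor_of_dist_le (hG : G.Connected) {a x y : α}
    (h : isAncestor G a x y) (hle : G.dist a y ≤ G.dist a x) : x = y := by
  unfold isAncestor at h
  exact hG.dist_eq_zero_iff.mp (by omega)

lemma Connected.isAncestor_antisymm (hG : G.Connected) {a x y : α}
    (hxy : isAncestor G a x y) (hyx : isAncestor G a y x) : x = y :=
  hG.eq_of_isAncestor_of_dist_le hxy (by unfold isAncestor at hyx; omega)

lemma Connected.isAncestor_trans_right (hG : G.Connected) {a b x c : α}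
    (hb : isAncestor G a b c) (hx : isAncestor G b x c) : isAncestor G a x c := by
  unfold isAncestor at *
  have := hG.dist_triangle (u := a) (v := b) (w := x)
  have := hG.dist_triangle (u := a) (v := x) (w := c)
  omega

lemma Connected.isAncestor_trans_right_left (hG : G.Connected) {a b x c : α}
    (hb : isAncestor G a b c) (hx : isAncestor G b x c) : isAncestor G a b x := by
  have := hG.isAncestor_trans_right hb hx
  unfold isAncestor at *
  omega

lemma Walk.IsPath.append_of_forall_mem_support {a b c : α} {p : G.Walk a b} {q : G.Walk b c}
    (hp : p.IsPath) (hq : q.IsPath) (h : ∀ x ∈ p.support, x ∈ q.support → x = b) :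
    (p.append q).IsPath := by
  have hq' := hq.support_nodup
  rw [← q.cons_tail_support, List.nodup_cons] at hq'
  rw [Walk.isPath_def, Walk.support_append, List.nodup_append]
  refine ⟨hp.support_nodup, hq'.2, fun x hx y hy hxy => hq'.1 ?_⟩
  subst hxy
  exact h x hx (List.mem_of_mem_tail hy) ▸ hy

lemma IsTree.eq_of_isPath (hG : G.IsTree) {a b : α} {p q : G.Walk a b}
    (hp : p.IsPath) (hq : q.IsPath) : p = q :=
  congrArg Subtype.val ((hG.isAcyclic.subsingleton_path a b).elim ⟨p, hp⟩ ⟨q, hq⟩)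

lemma IsTree.length_eq_dist_of_isPath (hG : G.IsTree) {a b : α} {p : G.Walk a b}
    (hp : p.IsPath) : p.length = G.dist a b := by
  obtain ⟨q, hq, hql⟩ := hG.connected.exists_path_of_dist a b
  rw [hG.eq_of_isPath hp hq, hql]

lemma IsTree.isAncestor_iff_mem_support (hG : G.IsTree) {a x b : α} {p : G.Walk a b}
    (hp : p.IsPath) : isAncestor G a x b ↔ x ∈ p.support := by
  classical
  constructor
  · intro h
    obtain ⟨q₁, hq₁⟩ := hG.connected.exists_walk_length_eq_dist a x
    obtain ⟨q₂, hq₂⟩ := hG.connected.exists_walk_length_eq_dist x b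
    have hq : (q₁.append q₂).IsPath := by
      refine Walk.isPath_of_length_eq_dist _ ?_
      unfold isAncestor at h
      rw [Walk.length_append]
      omega
    rw [← hG.eq_of_isPath hq hp, Walk.mem_support_append_iff]
    exact .inl q₁.end_mem_support
  · intro hx
    unfold isAncestor
    have hsplit := congrArg Walk.length (p.take_spec hx)
    rw [Walk.length_append] at hsplit
    have := dist_le (p.takeUntil x hx)
    have := dist_le (p.dropUntil x hx)
    have := hG.length_eq_dist_of_isPath hp
    have := hG.connected.dist_triangle (u := a) (v := x) (w := b)
    omega

lemma IsTree.isAncestor_total_s11 (hG : G.IsTree) {a x y c : α}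
    (hx : isAncestor G a x c) (hy : isAncestor G a y c) :
    isAncestor G a x y ∨ isAncestor G a y x := by
  classical
  obtain ⟨p, hp, -⟩ := hG.connected.exists_path_of_dist a c
  have hyp := (hG.isAncestor_iff_mem_support hp).mp hy
  have hxp := (hG.isAncestor_iff_mem_support hp).mp hx
  rw [← p.take_spec hyp, Walk.mem_support_append_iff] at hxp
  rcases hxp with hxp | hxp
  · exact .inl ((hG.isAncestor_iff_mem_support (hp.takeUntil hyp)).mpr hxp)
  · exact .inr (hG.connected.isAncestor_trans_right_left hy
      ((hG.isAncestor_iff_mem_support (hp.dropUntil hyp)).mpr hxp))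

/-- The paths from `w` down to `u` and to `v` meet only in `w`, since a further common vertex
would be a deeper common ancestor; so together they form the path from `u` to `v`. -/
lemma IsTree.isAncestor_of_forall_dist_le (hG : G.IsTree) {a u v w : α}
    (hu : isAncestor G a w u) (hv : isAncestor G a w v)
    (hw : ∀ y, isAncestor G a y u → isAncestor G a y v → G.dist a y ≤ G.dist a w) :
    isAncestor G u w v := by
  classical
  obtain ⟨p, hp, -⟩ := hG.connected.exists_path_of_dist a u
  obtain ⟨q, hq, -⟩ := hG.connected.exists_path_of_dist a v
  have hwp := (hG.isAncestor_iff_mem_support hp).mp hu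
  have hwq := (hG.isAncestor_iff_mem_support hq).mp hv
  have hpath : ((p.dropUntil w hwp).reverse.append (q.dropUntil w hwq)).IsPath := by
    refine (hp.dropUntil hwp).reverse.append_of_forall_mem_support (hq.dropUntil hwq)
      fun y hyp hyq => ?_
    rw [Walk.support_reverse, List.mem_reverse,
      ← hG.isAncestor_iff_mem_support (hp.dropUntil hwp)] at hyp
    rw [← hG.isAncestor_iff_mem_support (hq.dropUntil hwq)] at hyq
    have hwy := hG.connected.isAncestor_trans_right_left hu hyp
    refine (hG.connected.eq_of_isAncestor_of_dist_le hwy (hw y ?_ ?_)).symm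
    · exact hG.connected.isAncestor_trans_right hu hyp
    · exact hG.connected.isAncestor_trans_right hv hyq
  rw [hG.isAncestor_iff_mem_support hpath, Walk.mem_support_append_iff]
  exact .inr (q.dropUntil w hwq).start_mem_support

lemma isLCA.isAncestor_of_isTree {root u v w : α} (h : isLCA G root u v w) (hG : G.IsTree) :
    isAncestor G u w v :=
  hG.isAncestor_of_forall_dist_le h.1 h.2.1 fun y hyu hyv => by
    have := h.2.2 y hyu hyv
    unfold isAncestor at this
    omega

lemma reachable_of_forall_exists_adj_lt (f : α → ℕ) (r : α)
    (h : ∀ x, x ≠ r → ∃ y, G.Adj x y ∧ f y < f x) (x : α) : G.Reachable x r := by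
  induction hfx : f x using Nat.strong_induction_on generalizing x with
  | _ n ih =>
    by_cases hxr : x = r
    · exact hxr ▸ Reachable.refl x
    · obtain ⟨y, hxy, hlt⟩ := h x hxr
      exact hxy.reachable.trans (ih (f y) (hfx ▸ hlt) y rfl)

lemma nat_card_edgeSet_induce_of_support_subset [Finite α] {s : Set α} (h : G.support ⊆ s) :
    Nat.card (G.induce s).edgeSet = G.edgeSet.ncard := by
  classical
  have := Fintype.ofFinite α
  rw [← Nat.card_coe_set_eq, Nat.card_eq_fintype_card, Nat.card_eq_fintype_card,
    ← edgeFinset_card, ← edgeFinset_card, card_edgeFinset_induce_of_support_subset h]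

end SimpleGraph

open SimpleGraph

section VirtualTree

variable {α : Type} {G : SimpleGraph α} {root : α} {S : Finset α}

lemma virtGraph_adj {u v : α} : (virtGraph G S).Adj u v ↔
    u ≠ v ∧ u ∈ S ∧ v ∈ S ∧ ∀ x ∈ S, isAncestor G u x v → x = u ∨ x = v := by
  have hrel : ∀ a b, (¬∃ x ∈ S, x ≠ a ∧ x ≠ b ∧ G.dist a x + G.dist x b = G.dist a b) ↔
      ∀ x ∈ S, isAncestor G a x b → x = a ∨ x = b := by
    intro a b
    simp only [isAncestor]
    push Not
    exact forall₂_congr fun x _ => by tauto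
  simp only [virtGraph, fromRel_adj, hrel, isAncestor_comm (a := v) (b := u)]
  constructor
  · rintro ⟨hne, ⟨huS, hvS, h⟩ | ⟨hvS, huS, h⟩⟩
    · exact ⟨hne, huS, hvS, h⟩
    · exact ⟨hne, huS, hvS, fun x hx hxa => (h x hx hxa).symm⟩
  · rintro ⟨hne, huS, hvS, h⟩
    exact ⟨hne, .inl ⟨huS, hvS, h⟩⟩

lemma support_virtGraph_subset : (virtGraph G S).support ⊆ S :=
  fun _ ⟨_, huv⟩ => (virtGraph_adj.mp huv).2.1

structure IsParentIn (G : SimpleGraph α) (root : α) (S : Finset α) (p v : α) : Prop where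
  mem_left : p ∈ S
  mem_right : v ∈ S
  ancestor : isAncestor G root p v
  ne : p ≠ v
  deepest : ∀ y ∈ S, isAncestor G root y v → y ≠ v → isAncestor G root y p

lemma IsParentIn.eq (hG : G.Connected) {p p' v : α} (hp : IsParentIn G root S p v)
    (hp' : IsParentIn G root S p' v) : p = p' :=
  hG.isAncestor_antisymm (hp'.deepest p hp.mem_left hp.ancestor hp.ne)
    (hp.deepest p' hp'.mem_left hp'.ancestor hp'.ne)

lemma IsParentIn.adj (hG : G.Connected) {p v : α} (hp : IsParentIn G root S p v) :
    (virtGraph G S).Adj p v := by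
  obtain ⟨hpS, hvS, hpv, hne, hmax⟩ := hp
  refine virtGraph_adj.mpr ⟨hne, hpS, hvS, fun x hxS hx => ?_⟩
  by_cases hxv : x = v
  · exact .inr hxv
  · exact .inl (hG.isAncestor_antisymm (hmax x hxS (hG.isAncestor_trans_right hpv hx) hxv)
      (hG.isAncestor_trans_right_left hpv hx))

lemma isParentIn_of_adj_of_isAncestor (hG : G.IsTree) {u v : α} (huv : (virtGraph G S).Adj u v)
    (hanc : isAncestor G root u v) : IsParentIn G root S u v := by
  obtain ⟨hne, huS, hvS, hbetween⟩ := virtGraph_adj.mp huv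
  refine ⟨huS, hvS, hanc, hne, fun y hyS hy hyv => ?_⟩
  rcases hG.isAncestor_total_s11 hy hanc with hyu | huy
  · exact hyu
  · have hy' : isAncestor G u y v := by
      unfold isAncestor at *
      omega
    rcases hbetween y hyS hy' with rfl | rfl
    · exact isAncestor_refl _ _
    · exact absurd rfl hyv

lemma virtGraph_adj_iff_isParentIn (hG : G.IsTree) {lca : α → α → α}
    (hlca : ∀ u v, isLCA G root u v (lca u v)) (hclosed : ∀ u ∈ S, ∀ v ∈ S, lca u v ∈ S)
    {u v : α} : (virtGraph G S).Adj u v ↔ IsParentIn G root S u v ∨ IsParentIn G root S v u := by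
  refine ⟨fun huv => ?_, fun h => h.elim (·.adj hG.connected) (·.adj hG.connected |>.symm)⟩
  obtain ⟨-, huS, hvS, hbetween⟩ := virtGraph_adj.mp huv
  rcases hbetween (lca u v) (hclosed u huS v hvS) ((hlca u v).isAncestor_of_isTree hG)
    with hw | hw
  · exact .inl (isParentIn_of_adj_of_isAncestor hG huv (hw ▸ (hlca u v).2.1))
  · exact .inr (isParentIn_of_adj_of_isAncestor hG huv.symm (hw ▸ (hlca u v).1))

lemma exists_mem_forall_isAncestor (hG : G.Connected) {lca : α → α → α}
    (hlca : ∀ u v, isLCA G root u v (lca u v)) (hS : S.Nonempty)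
    (hclosed : ∀ u ∈ S, ∀ v ∈ S, lca u v ∈ S) : ∃ r ∈ S, ∀ s ∈ S, isAncestor G root r s := by
  obtain ⟨r, hrS, hmin⟩ := S.exists_min_image (G.dist root) hS
  refine ⟨r, hrS, fun s hs => ?_⟩
  have hw : lca r s = r :=
    hG.eq_of_isAncestor_of_dist_le (hlca r s).1 (hmin _ (hclosed r hrS s hs))
  exact hw ▸ (hlca r s).2.1

lemma exists_isParentIn (hG : G.IsTree) {r : α} (hr : ∀ s ∈ S, isAncestor G root r s)
    (hrS : r ∈ S) {v : α} (hvS : v ∈ S) (hvr : v ≠ r) : ∃ p, IsParentIn G root S p v := by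
  classical
  set A := S.filter fun x => isAncestor G root x v ∧ x ≠ v
  have hA : A.Nonempty := ⟨r, Finset.mem_filter.mpr ⟨hrS, hr v hvS, Ne.symm hvr⟩⟩
  obtain ⟨p, hpA, hpmax⟩ := A.exists_max_image (G.dist root) hA
  obtain ⟨hpS, hpv, hne⟩ := Finset.mem_filter.mp hpA
  refine ⟨p, hpS, hvS, hpv, hne, fun y hyS hyv hne' => ?_⟩
  rcases hG.isAncestor_total_s11 hyv hpv with hyp | hpy
  · exact hyp
  · have hle := hpmax y (Finset.mem_filter.mpr ⟨hyS, hyv, hne'⟩)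
    exact hG.connected.eq_of_isAncestor_of_dist_le hpy hle ▸ isAncestor_refl _ _

lemma ncard_edgeSet_virtGraph (hG : G.IsTree) {lca : α → α → α}
    (hlca : ∀ u v, isLCA G root u v (lca u v)) (hclosed : ∀ u ∈ S, ∀ v ∈ S, lca u v ∈ S)
    {r : α} (hrS : r ∈ S) (hr : ∀ s ∈ S, isAncestor G root r s) :
    (virtGraph G S).edgeSet.ncard = S.card - 1 := by
  classical
  choose! pa hpa using fun v (hvS : v ∈ S) (hvr : v ≠ r) => exists_isParentIn hG hr hrS hvS hvr
  have hnot_r : ∀ p, ¬ IsParentIn G root S p r := fun p hp =>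
    hp.ne (hG.connected.isAncestor_antisymm hp.ancestor (hr p hp.mem_left))
  have hedge : (virtGraph G S).edgeSet = (fun v => s(pa v, v)) '' ↑(S.erase r) := by
    ext e
    induction e using Sym2.ind with
    | _ u v =>
      simp only [mem_edgeSet, Set.mem_image, Finset.mem_coe, Finset.mem_erase]
      constructor
      · intro huv
        rcases (virtGraph_adj_iff_isParentIn hG hlca hclosed).mp huv with h | h
        · have hvr : v ≠ r := by rintro rfl; exact hnot_r u h
          exact ⟨v, ⟨hvr, h.mem_right⟩, by rw [(hpa v h.mem_right hvr).eq hG.connected h]⟩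
        · have hur : u ≠ r := by rintro rfl; exact hnot_r v h
          exact ⟨u, ⟨hur, h.mem_right⟩, by rw [(hpa u h.mem_right hur).eq hG.connected h, Sym2.eq_swap]⟩
      · rintro ⟨w, ⟨hwr, hwS⟩, hw⟩
        rw [← mem_edgeSet, ← hw]
        exact (hpa w hwS hwr).adj hG.connected
  rw [hedge, Set.InjOn.ncard_image, Set.ncard_coe_finset, Finset.card_erase_of_mem hrS]
  intro x hx y hy hxy
  simp only [Finset.coe_erase, Set.mem_sdiff, Finset.mem_coe, Set.mem_singleton_iff] at hx hy
  rcases Sym2.eq_iff.mp hxy with ⟨-, h⟩ | ⟨hxy, hyx⟩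
  · exact h
  · exact hG.connected.isAncestor_antisymm (hyx ▸ (hpa y hy.1 hy.2).ancestor)
      (hxy ▸ (hpa x hx.1 hx.2).ancestor)

lemma connected_induce_virtGraph (hG : G.IsTree) {r : α} (hrS : r ∈ S)
    (hr : ∀ s ∈ S, isAncestor G root r s) :
    ((virtGraph G S).induce (S : Set α)).Connected := by
  have : Nonempty (S : Set α) := ⟨⟨r, hrS⟩⟩
  refine Connected.mk fun x y => ?_
  have hstep : ∀ x : (S : Set α), x ≠ ⟨r, hrS⟩ → ∃ y : (S : Set α),
      ((virtGraph G S).induce (S : Set α)).Adj x y ∧ G.dist root y < G.dist root x := by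
    rintro ⟨x, hxS⟩ hxr
    obtain ⟨p, hp⟩ := exists_isParentIn hG hr hrS hxS (fun h => hxr (Subtype.ext h))
    refine ⟨⟨p, hp.mem_left⟩, (hp.adj hG.connected).symm, ?_⟩
    have := hG.connected.pos_dist_of_ne hp.ne
    have := hp.ancestor
    unfold isAncestor at this
    simp only
    omega
  have reach := reachable_of_forall_exists_adj_lt (fun x : (S : Set α) => G.dist root x) _ hstep
  exact (reach x).trans (reach y).symm

end VirtualTree

/-- the virtual tree of an LCA-closed set `S` is a tree on `S`
with `|S| - 1` edges. -/
theorem stmt11 (G : SimpleGraph V) (hG : G.IsTree) (root : V)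
    (lca : V → V → V) (hlca : ∀ u v, isLCA G root u v (lca u v))
    (S : Finset V) (hS : S.Nonempty)
    (hclosed : ∀ u ∈ S, ∀ v ∈ S, lca u v ∈ S) :
    ((virtGraph G S).induce (S : Set V)).IsTree ∧
      (virtGraph G S).edgeSet.ncard = S.card - 1 := by
  obtain ⟨r, hrS, hr⟩ := exists_mem_forall_isAncestor hG.connected hlca hS hclosed
  have hcard := ncard_edgeSet_virtGraph hG hlca hclosed hrS hr
  refine ⟨isTree_iff_connected_and_card.mpr
    ⟨connected_induce_virtGraph hG hrS hr, ?_⟩, hcard⟩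
  rw [nat_card_edgeSet_induce_of_support_subset support_virtGraph_subset, hcard,
    Nat.card_coe_set_eq, Set.ncard_coe_finset]
  have := hS.card_pos
  omega
end

section
/- Let T be a rooted tree and S a finite set of nodes closed under pairwise LCA. If {u, v} is an edge of the virtual tree of S with u an ancestor of v in T, then u is the closest strict ancestor of v in T that belongs to S; in particular, for each non-minimal-depth node v of S its virtual-tree parent is well defined and unique. -/
/-!
Ancestors of a fixed node `v` all lie on the unique root–`v` path of the tree, so any two of them
are comparable. If `u` is an ancestor of `v` adjacent to `v` in the virtual tree, a strict ancestor
`x ∈ S` of `v` that were not an ancestor of `u` would lie strictly between `u` and `v`, which the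
virtual-tree edge forbids. Two such virtual parents `u, u'` are then ancestors of each other, hence
equal.
-/

variable {V : Type} [Fintype V] [DecidableEq V]

namespace SimpleGraph

theorem Walk.dist_add_dist_of_mem_support {V : Type*} {G : SimpleGraph V} {a b c : V}
    (p : G.Walk a c) (hp : p.length = G.dist a c) (hb : b ∈ p.support) :
    G.dist a b + G.dist b c = G.dist a c := by
  classical
  have hlen : (p.takeUntil b hb).length + (p.dropUntil b hb).length = p.length := by
    rw [← Walk.length_append, p.take_spec hb]
  have hab := dist_le (p.takeUntil b hb)
  have hbc := dist_le (p.dropUntil b hb)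
  have htri := (p.takeUntil b hb).reachable.dist_triangle_left c
  omega

theorem IsTree.mem_support_of_dist_add_dist {V : Type*} {G : SimpleGraph V} (hG : G.IsTree)
    {a b c : V} (p : G.Walk a c) (hp : p.IsPath) (hb : G.dist a b + G.dist b c = G.dist a c) :
    b ∈ p.support := by
  obtain ⟨q₁, hq₁⟩ := hG.connected.exists_walk_length_eq_dist a b
  obtain ⟨q₂, hq₂⟩ := hG.connected.exists_walk_length_eq_dist b c
  have hq : (q₁.append q₂).IsPath :=
    Walk.isPath_of_length_eq_dist _ (by rw [Walk.length_append, hq₁, hq₂, hb])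
  have hpq : p = q₁.append q₂ :=
    congrArg Subtype.val ((hG.isAcyclic.subsingleton_path a c).elim ⟨p, hp⟩ ⟨_, hq⟩)
  rw [hpq, Walk.mem_support_append_iff]
  exact Or.inl q₁.end_mem_support

end SimpleGraph

open SimpleGraph

section

variable {V : Type} {G : SimpleGraph V} {root : V}

theorem isAncestor_refl (u : V) : isAncestor G root u u := by
  simp [isAncestor]

theorem isAncestor_antisymm_s13 (hG : G.Connected) {u w : V}
    (huw : isAncestor G root u w) (hwu : isAncestor G root w u) : u = w := by
  unfold isAncestor at huw hwu
  have : G.dist u w = 0 := by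
    have := G.dist_comm (u := w) (v := u)
    omega
  exact hG.dist_eq_zero_iff.mp this

theorem isAncestor_total_of_isAncestor (hG : G.IsTree) {a b v : V}
    (ha : isAncestor G root a v) (hb : isAncestor G root b v) :
    isAncestor G root a b ∨ isAncestor G root b a := by
  obtain ⟨q₁, hq₁⟩ := hG.connected.exists_walk_length_eq_dist root b
  obtain ⟨q₂, hq₂⟩ := hG.connected.exists_walk_length_eq_dist b v
  have hq : (q₁.append q₂).IsPath :=
    Walk.isPath_of_length_eq_dist _ (by rw [Walk.length_append, hq₁, hq₂]; exact hb)
  rcases (Walk.mem_support_append_iff _ _).1 (hG.mem_support_of_dist_add_dist _ hq ha) with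
    h | h
  · exact Or.inl (q₁.dist_add_dist_of_mem_support hq₁ h)
  · right
    have hbav := q₂.dist_add_dist_of_mem_support hq₂ h
    unfold isAncestor at ha hb ⊢
    have := G.dist_comm (u := b) (v := a)
    omega

theorem virtGraph_adj_iff {S : Finset V} {u v : V} :
    (virtGraph G S).Adj u v ↔ u ≠ v ∧ u ∈ S ∧ v ∈ S ∧
      ¬ ∃ x ∈ S, x ≠ u ∧ x ≠ v ∧ G.dist u x + G.dist x v = G.dist u v := by
  have hsymm : ∀ x, G.dist v x + G.dist x u = G.dist v u ↔
      G.dist u x + G.dist x v = G.dist u v := by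
    intro x
    have := G.dist_comm (u := v) (v := x)
    have := G.dist_comm (u := x) (v := u)
    have := G.dist_comm (u := v) (v := u)
    omega
  simp only [virtGraph, fromRel_adj, hsymm]
  grind

theorem isAncestor_of_virtGraph_adj (hG : G.IsTree) {S : Finset V} {u v : V}
    (huv : (virtGraph G S).Adj u v) (hanc : isAncestor G root u v)
    {x : V} (hxS : x ∈ S) (hxv : x ≠ v) (hxanc : isAncestor G root x v) :
    isAncestor G root x u := by
  obtain ⟨-, -, -, hno⟩ := virtGraph_adj_iff.1 huv
  obtain rfl | hxu := eq_or_ne x u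
  · exact isAncestor_refl x
  refine (isAncestor_total_of_isAncestor hG hxanc hanc).resolve_right
    fun hux => hno ⟨x, hxS, hxu, hxv, ?_⟩
  unfold isAncestor at hanc hxanc hux
  omega

end

theorem stmt13_general (G : SimpleGraph V) (hG : G.IsTree) (root : V)
    (S : Finset V)
    (u v : V) (huv : (virtGraph G S).Adj u v) (hanc : isAncestor G root u v) :
    u ∈ S ∧ u ≠ v ∧
      (∀ x ∈ S, x ≠ v → isAncestor G root x v → isAncestor G root x u) ∧
      ∀ u', (virtGraph G S).Adj u' v → isAncestor G root u' v → u' = u := by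
  obtain ⟨hne, huS, -, -⟩ := virtGraph_adj_iff.1 huv
  have hclosest : ∀ x ∈ S, x ≠ v → isAncestor G root x v → isAncestor G root x u :=
    fun _ hxS hxv hxanc => isAncestor_of_virtGraph_adj hG huv hanc hxS hxv hxanc
  refine ⟨huS, hne, hclosest, fun u' hu'v hanc' => ?_⟩
  obtain ⟨hne', hu'S, -, -⟩ := virtGraph_adj_iff.1 hu'v
  exact isAncestor_antisymm_s13 hG.connected (hclosest u' hu'S hne' hanc')
    (isAncestor_of_virtGraph_adj hG hu'v hanc' huS hne hanc)

/-- if `{u,v}` is a virtual-tree edge with `u` an ancestor of `v`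
in `T`, then `u` is the closest strict ancestor of `v` belonging to `S`; in
particular the virtual-tree parent of `v` is unique. -/
theorem stmt13 (G : SimpleGraph V) (hG : G.IsTree) (root : V)
    (lca : V → V → V) (hlca : ∀ u v, isLCA G root u v (lca u v))
    (S : Finset V) (hclosed : ∀ u ∈ S, ∀ v ∈ S, lca u v ∈ S)
    (u v : V) (huv : (virtGraph G S).Adj u v) (hanc : isAncestor G root u v) :
    u ∈ S ∧ u ≠ v ∧
      (∀ x ∈ S, x ≠ v → isAncestor G root x v → isAncestor G root x u) ∧
      ∀ u', (virtGraph G S).Adj u' v → isAncestor G root u' v → u' = u :=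
  stmt13_general G hG root S u v huv hanc
end
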